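/- arXiv:1903.07077 — 2 statements merged into one kernel-verified Lean document; each statement's English description precedes it below -/
import Mathlib

section
/- Let p ≥ 3 and k ≥ 1 be integers and let G = G^{p−2,1}_{p,pk+1}. Set z = (xy)^{2k+1}((xy)^k x)^{−2}. Then in G the following identity holds: (z (xy)^k x)^{p−2} ((xy)^k x)^2 = (xy)^k x (y (xy)^k)^{p−2} (xy)^k x. (The left-hand side is the longitude word λ' of the twisted torus knot T^{p−2,1}_{p,pk+1}.) -/
def X : FreeGroup (Fin 2) := FreeGroup.of 0
def Y : FreeGroup (Fin 2) := FreeGroup.of 1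

/-- The word `z = (xy)^{2k+1}((xy)^k x)^{-2}`. -/
def Zw (k : ℤ) : FreeGroup (Fin 2) :=
  (X * Y) ^ (2 * k + 1) * ((X * Y) ^ k * X) ^ (-2 : ℤ)

/-- The relator of the knot group `G^{p-2,1}_{p,pk+1}`:
`(x z (xy)^k)^{p-3} x ((xy)^k x)^2 = (z (xy)^k)^{p-3}(xy)^{2k+1}`. -/
def relD (p k : ℤ) : FreeGroup (Fin 2) :=
  (X * Zw k * (X * Y) ^ k) ^ (p - 3) * X * ((X * Y) ^ k * X) ^ (2 : ℤ) *
    ((Zw k * (X * Y) ^ k) ^ (p - 3) * (X * Y) ^ (2 * k + 1))⁻¹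

/-- The longitude identity is in fact a free-group identity, valid in any group. -/
lemma longitude_aux {G : Type*} [Group G] (n k : ℤ) (x y : G) :
    ((x * y) ^ (2 * k + 1) * ((x * y) ^ k * x) ^ (-2 : ℤ) * (x * y) ^ k * x) ^ n *
        ((x * y) ^ k * x) ^ (2 : ℤ) =
      (x * y) ^ k * x * (y * (x * y) ^ k) ^ n * (x * y) ^ k * x := by
  obtain ⟨b, hb⟩ : ∃ b, b = x * y := ⟨_, rfl⟩
  have hy : y = x⁻¹ * b := by rw [hb]; group
  rw [← hb, hy]
  have h1 : SemiconjBy (b ^ k) (b ^ (k + 1) * x⁻¹)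
      (b ^ (2 * k + 1) * (b ^ k * x) ^ (-2 : ℤ) * b ^ k * x) := by
    show _ * _ = _ * _
    rw [zpow_neg, zpow_two]; group
  have h2 : SemiconjBy x (x⁻¹ * b * b ^ k) (b ^ (k + 1) * x⁻¹) := by
    show _ * _ = _ * _; group
  have H1 := (h1.zpow_right n).eq
  have H2 := (h2.zpow_right n).eq
  have e1 : (b ^ (2 * k + 1) * (b ^ k * x) ^ (-2 : ℤ) * b ^ k * x) ^ n =
      b ^ k * (b ^ (k + 1) * x⁻¹) ^ n * (b ^ k)⁻¹ := by
    rw [eq_mul_inv_iff_mul_eq]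
    exact H1.symm
  have e2 : (x⁻¹ * b * b ^ k) ^ n = x⁻¹ * ((b ^ (k + 1) * x⁻¹) ^ n * x) := by
    rw [← H2, inv_mul_cancel_left]
  rw [e1, e2]
  generalize (b ^ (k + 1) * x⁻¹) ^ n = w
  rw [zpow_two]; group

theorem statement7 (p k : ℤ) (hp : 3 ≤ p) (hk : 1 ≤ k)
    (x y z : PresentedGroup ({relD p k} : Set (FreeGroup (Fin 2))))
    (hx : x = PresentedGroup.of 0) (hy : y = PresentedGroup.of 1)
    (hz : z = (x * y) ^ (2 * k + 1) * ((x * y) ^ k * x) ^ (-2 : ℤ)) :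
    (z * (x * y) ^ k * x) ^ (p - 2) * ((x * y) ^ k * x) ^ (2 : ℤ) =
      (x * y) ^ k * x * (y * (x * y) ^ k) ^ (p - 2) * (x * y) ^ k * x := by
  subst hz
  exact longitude_aux (p - 2) k x y
end

section
/- Let p ≥ 3 and k ≥ 1 be integers, let G = G^{p−2,1}_{p,pk+1}, and let λ' denote the element (xy)^k x(y(xy)^k)^{p−2}(xy)^k x of G. Suppose ρ : G → Homeo⁺(ℝ) is a group homomorphism such that ρ(x)α > α for all α ∈ ℝ. Then ρ(x^{−(pk+2p−2)} λ')α > ρ(y)α for all α ∈ ℝ. -/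
section Helpers

lemma conj_zpow_eq {G : Type*} [Group G] (g q : G) (n : ℤ) :
    (g * q * g⁻¹) ^ n = g * q ^ n * g⁻¹ := by
  have := (map_zpow (MulAut.conj g) q n).symm
  simpa [MulAut.conj_apply, mul_assoc] using this

lemma image_relD {G : Type*} [Group G] (f : FreeGroup (Fin 2) →* G) (p k : ℤ)
    (x y : G) (hfx : f X = x) (hfy : f Y = y) :
    f (relD p k) =
      (x * ((x*y)^(2*k+1) * ((x*y)^k*x)^(-2:ℤ)) * (x*y)^k)^(p-3) * x * ((x*y)^k*x)^(2:ℤ) *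
      ((((x*y)^(2*k+1) * ((x*y)^k*x)^(-2:ℤ)) * (x*y)^k)^(p-3) * (x*y)^(2*k+1))⁻¹ := by
  simp only [relD, Zw, map_mul, map_zpow, map_inv, hfx, hfy]

lemma zpow_neg_two {G : Type*} [Group G] (g : G) : g^(-2:ℤ) = g⁻¹ * g⁻¹ := by group

lemma oi_mul_apply (f g : ℝ ≃o ℝ) (α : ℝ) : (f * g) α = f (g α) := rfl

lemma oi_pow_succ (f : ℝ ≃o ℝ) (n : ℕ) (α : ℝ) : (f ^ (n + 1)) α = f ((f ^ n) α) := by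
  rw [pow_succ']; rfl

lemma oi_pow_succ' (f : ℝ ≃o ℝ) (n : ℕ) (α : ℝ) : (f ^ (n + 1)) α = (f ^ n) (f α) := by
  rw [pow_succ]; rfl

lemma oi_pow_add (f : ℝ ≃o ℝ) (m n : ℕ) (α : ℝ) : (f ^ (m + n)) α = (f ^ m) ((f ^ n) α) := by
  rw [pow_add]; rfl

lemma oi_zpow_eq_pow (f : ℝ ≃o ℝ) {m : ℤ} {n : ℕ} (h : m = (n : ℤ)) : f ^ m = f ^ n := by
  rw [h, zpow_natCast]

lemma oi_le_pow (f : ℝ ≃o ℝ) (hf : ∀ α, α ≤ f α) : ∀ (n : ℕ) (α : ℝ), α ≤ (f ^ n) α := by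
  intro n
  induction n with
  | zero => intro α; simp
  | succ n ih =>
      intro α
      rw [oi_pow_succ]
      exact le_trans (ih α) (hf _)

lemma oi_pow_le_pow (f g : ℝ ≃o ℝ) (hfg : ∀ α, f α ≤ g α) :
    ∀ (n : ℕ) (α : ℝ), (f ^ n) α ≤ (g ^ n) α := by
  intro n
  induction n with
  | zero => intro α; exact le_rfl
  | succ n ih =>
      intro α
      rw [oi_pow_succ, oi_pow_succ]
      exact le_trans (f.le_iff_le.mpr (ih α)) (hfg _)

end Helpers

theorem statement15 (p k : ℤ) (hp : 3 ≤ p) (hk : 1 ≤ k)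
    (x y lam : PresentedGroup ({relD p k} : Set (FreeGroup (Fin 2))))
    (hx : x = PresentedGroup.of 0) (hy : y = PresentedGroup.of 1)
    (hlam : lam = (x * y) ^ k * x * (y * (x * y) ^ k) ^ (p - 2) * (x * y) ^ k * x)
    (ρ : PresentedGroup ({relD p k} : Set (FreeGroup (Fin 2))) →* (ℝ ≃o ℝ))
    (hρ : ∀ α : ℝ, α < ρ x α) :
    ∀ α : ℝ, ρ y α < ρ (x ^ (-(p * k + 2 * p - 2)) * lam) α := by
  -- Step 0: the relator holds in the presented group
  have hone : (PresentedGroup.mk ({relD p k} : Set (FreeGroup (Fin 2)))) (relD p k) = 1 :=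
    (QuotientGroup.eq_one_iff _).mpr
      (Subgroup.subset_normalClosure (Set.mem_singleton _))
  have hxm : (PresentedGroup.mk ({relD p k} : Set (FreeGroup (Fin 2)))) X = x := by
    rw [hx]; rfl
  have hym : (PresentedGroup.mk ({relD p k} : Set (FreeGroup (Fin 2)))) Y = y := by
    rw [hy]; rfl
  rw [image_relD _ p k x y hxm hym, mul_inv_eq_one] at hone
  -- Step 1: algebraic consequences of the relator
  set bb := x * y with hbb'
  set a := bb ^ k * x with ha'
  set q := bb ^ (2*k+1) * a⁻¹ with hq'
  set h := x⁻¹ * q with hh'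
  set s := bb ^ (3*k+1) * (a⁻¹ * a⁻¹) with hs'
  have e1 : x * (bb^(2*k+1) * a^(-2:ℤ)) * bb^k = x*q*x⁻¹ := by
    rw [hq', ha', zpow_neg_two]; group
  have e2 : bb^(2*k+1) * a^(-2:ℤ) * bb^k = q*x⁻¹ := by
    rw [hq', ha', zpow_neg_two]; group
  have e3 : bb^(2*k+1) = q*a := by rw [hq']; group
  rw [e1, e2] at hone
  rw [e3] at hone
  rw [conj_zpow_eq x q (p-3)] at hone
  have e4 : q*x⁻¹ = q*h*q⁻¹ := by rw [hh']; group
  rw [e4, conj_zpow_eq q h (p-3)] at hone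
  -- hone : x*q^(p-3)*x⁻¹ * x * a^2 = q*h^(p-3)*q⁻¹ * (q*a)
  have hxh : x*h = q := by rw [hh']; group
  have hA2 : q^(p-3)*a = h^(p-2) := by
    calc q^(p-3)*a = x⁻¹*(x*q^(p-3)*x⁻¹*x*a^(2:ℤ))*a⁻¹ := by group
      _ = x⁻¹*(q*h^(p-3)*q⁻¹*(q*a))*a⁻¹ := by rw [hone]
      _ = x⁻¹*q*h^(p-3) := by group
      _ = x⁻¹*(x*h)*h^(p-3) := by rw [hxh]
      _ = h^(p-2) := by group
  have hA3 : h = a⁻¹*s*a := by rw [hh', hq', hs', ha']; group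
  have e7 : h^(p-2) = a⁻¹*s^(p-2)*a := by
    rw [hA3]
    have := conj_zpow_eq a⁻¹ s (p-2)
    simpa using this
  have hA4 : a*q^(p-3) = s^(p-2) := by
    calc a*q^(p-3) = a*(q^(p-3)*a)*a⁻¹ := by group
      _ = a*(h^(p-2))*a⁻¹ := by rw [hA2]
      _ = a*(a⁻¹*s^(p-2)*a)*a⁻¹ := by rw [e7]
      _ = s^(p-2) := by group
  have hA5 : h*q^(p-3) = q^(p-3)*s := by
    calc h*q^(p-3) = a⁻¹*s*(a*q^(p-3)) := by rw [hA3]; group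
      _ = a⁻¹*s*s^(p-2) := by rw [hA4]
      _ = a⁻¹*(s^(p-2)*s) := by group
      _ = a⁻¹*(a*q^(p-3)*s) := by rw [hA4]
      _ = q^(p-3)*s := by group
  -- lam = q^(p-2) * a * a
  have hybb : y = x⁻¹*bb := by rw [hbb']; group
  have e5 : y*bb^k = a⁻¹*q*a := by rw [hybb, hq', ha']; group
  rw [e5] at hlam
  have e6 : (a⁻¹*q*a)^(p-2) = a⁻¹*q^(p-2)*a := by
    have := conj_zpow_eq a⁻¹ q (p-2)
    simpa using this
  rw [e6] at hlam
  have hL1 : lam = q^(p-2)*(a*a) := by rw [hlam, ha']; group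
  -- the key identity : lam = x * (q^(p-3) * bb^(3k+1))
  have hKEY : lam = x*(q^(p-3)*bb^(3*k+1)) := by
    have : x*(q^(p-3)*bb^(3*k+1)) = q^(p-2)*(a*a) := by
      calc x*(q^(p-3)*bb^(3*k+1)) = x*(q^(p-3)*s)*(a*a) := by rw [hs']; group
        _ = x*(h*q^(p-3))*(a*a) := by rw [hA5]
        _ = q^(p-2)*(a*a) := by rw [hh']; group
    rw [hL1, this]
  -- Step 2: the dynamical chain
  set F := ρ x with hF
  set Bf := ρ bb with hBf
  set Af := ρ a with hAf
  set Qf := ρ q with hQf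
  set Hf := ρ h with hHf
  set K := k.toNat with hK
  set m3 := (p-3).toNat with hm3
  have hpk : 3 ≤ p * k := by nlinarith
  set n2 := (p*k+2*p-4).toNat with hn2
  have cK : ρ (bb^k) = Bf^K := by rw [map_zpow]; exact oi_zpow_eq_pow _ (by omega)
  have c2K : ρ (bb^(2*k+1)) = Bf^(2*K+1) := by
    rw [map_zpow]; exact oi_zpow_eq_pow _ (by omega)
  have c3K : ρ (bb^(3*k+1)) = Bf^(3*K+1) := by
    rw [map_zpow]; exact oi_zpow_eq_pow _ (by omega)
  have cQ3 : ρ (q^(p-3)) = Qf^m3 := by rw [map_zpow]; exact oi_zpow_eq_pow _ (by omega)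
  have cH : ρ (h^(p-2)) = Hf^(m3+1) := by
    rw [map_zpow]; exact oi_zpow_eq_pow _ (by push_cast; omega)
  have hQxh : Qf = F*Hf := by rw [hQf, hF, hHf, ← map_mul, hxh]
  have hQAmap : Bf^(2*K+1) = Qf * Af := by rw [← c2K, e3, map_mul]
  have hQA : ∀ α, (Bf^(2*K+1)) α = Qf (Af α) := by
    intro α; rw [hQAmap, oi_mul_apply]
  have hAF : Af = Bf^K * F := by rw [hAf, ha', map_mul, cK]
  have hApt : ∀ α, Af α = (Bf^K) (F α) := by intro α; rw [hAF, oi_mul_apply]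
  have hRel : Hf^(m3+1) = Qf^m3 * Af := by rw [← cH, ← cQ3, ← map_mul, hA2]
  have hpos : ∀ α, α < F α := hρ
  have hIH1 : ∀ (n : ℕ) (δ : ℝ), (Hf^n) δ ≤ ((F*Hf)^n) δ := by
    intro n
    induction n with
    | zero => intro δ; exact le_rfl
    | succ n ih =>
        intro δ
        rw [oi_pow_succ, oi_pow_succ]
        have t1 : Hf ((Hf^n) δ) ≤ F (Hf ((Hf^n) δ)) := (hpos _).le
        have t2 : F (Hf ((Hf^n) δ)) = (F*Hf) ((Hf^n) δ) := rfl
        have t3 : (F*Hf) ((Hf^n) δ) ≤ (F*Hf) (((F*Hf)^n) δ) := (F*Hf).le_iff_le.mpr (ih δ)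
        calc Hf ((Hf^n) δ) ≤ (F*Hf) ((Hf^n) δ) := t2 ▸ t1
          _ ≤ (F*Hf) (((F*Hf)^n) δ) := t3
  have hP1 : ∀ α, Af α ≤ Hf α := by
    intro α
    have h1 : (Hf^(m3+1)) α = (Qf^m3) (Af α) := by rw [hRel, oi_mul_apply]
    have h2 : (Qf^m3) (Af α) = ((F*Hf)^m3) (Af α) := by rw [hQxh]
    have h3 : (Hf^m3) (Af α) ≤ ((F*Hf)^m3) (Af α) := hIH1 _ _
    have h4 : (Hf^(m3+1)) α = (Hf^m3) (Hf α) := oi_pow_succ' _ _ _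
    have h5 : (Hf^m3) (Af α) ≤ (Hf^m3) (Hf α) := by
      rw [← h4, h1, h2]; exact h3
    exact (Hf^m3).le_iff_le.mp h5
  have hP2 : ∀ α, F (Af α) ≤ Qf α := by
    intro α
    have : Qf α = F (Hf α) := by rw [hQxh, oi_mul_apply]
    rw [this]
    exact F.le_iff_le.mpr (hP1 α)
  have hK1 : 1 ≤ K := by omega
  have hP3'' : ∀ δ, F ((Bf^(2*K)) δ) < (Bf^(2*K+1)) δ := by
    intro δ
    have hc1 : (Bf^K) δ < Af δ := by
      rw [hApt]; exact (Bf^K).strictMono (hpos δ)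
    have hxc1 : (Bf^K) δ < F (Af δ) := lt_trans hc1 (hpos _)
    have h5 : (Bf^(2*K)) δ < (Bf^K) (F (Af δ)) := by
      have : (Bf^(2*K)) δ = (Bf^K) ((Bf^K) δ) := by
        rw [show 2*K = K+K by ring, oi_pow_add]
      rw [this]
      exact (Bf^K).strictMono hxc1
    have h6 : F ((Bf^(2*K)) δ) < F ((Bf^K) (F (Af δ))) := F.strictMono h5
    have h7 : (Bf^K) (F (Af δ)) = Af (Af δ) := (hApt (Af δ)).symm
    have h8 : F (Af (Af δ)) ≤ Qf (Af δ) := hP2 _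
    have h9 : Qf (Af δ) = (Bf^(2*K+1)) δ := (hQA δ).symm
    calc F ((Bf^(2*K)) δ) < F ((Bf^K) (F (Af δ))) := h6
      _ = F (Af (Af δ)) := by rw [h7]
      _ ≤ Qf (Af δ) := h8
      _ = (Bf^(2*K+1)) δ := h9
  have hP3 : ∀ τ, F τ < Bf τ := by
    intro τ
    have := hP3'' ((Bf^(2*K)).symm τ)
    rw [oi_pow_succ, OrderIso.apply_symm_apply] at this
    exact this
  have hP4 : ∀ (n : ℕ) (α : ℝ), (F^n) α ≤ (Bf^n) α :=
    oi_pow_le_pow F Bf (fun α => (hP3 α).le)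
  have hP4s : ∀ β, (F^K) β < (Bf^K) β := by
    obtain ⟨K', hK'⟩ : ∃ K', K = K'+1 := ⟨K-1, by omega⟩
    intro β
    rw [hK', oi_pow_succ, oi_pow_succ]
    calc F ((F^K') β) ≤ F ((Bf^K') β) := F.le_iff_le.mpr (hP4 _ _)
      _ < Bf ((Bf^K') β) := hP3 _
  have hAs : ∀ α, (F^(K+1)) α < Af α := by
    intro α
    rw [hApt, oi_pow_succ']
    exact hP4s (F α)
  have hP6 : ∀ α, (F^(K+2)) α ≤ Qf α := by
    intro α
    have : (F^(K+2)) α = F ((F^(K+1)) α) := oi_pow_succ _ _ _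
    rw [this]
    exact le_trans (F.le_iff_le.mpr (hAs α).le) (hP2 α)
  have hP7 : ∀ (n : ℕ) (α : ℝ), (F^(n*(K+2))) α ≤ (Qf^n) α := by
    intro n
    induction n with
    | zero => intro α; simp
    | succ n ih =>
        intro α
        have e : (n+1)*(K+2) = (K+2)+n*(K+2) := by ring
        rw [e, oi_pow_add]
        calc (F^(K+2)) ((F^(n*(K+2))) α) ≤ (F^(K+2)) ((Qf^n) α) :=
              (F^(K+2)).le_iff_le.mpr (ih α)
          _ ≤ Qf ((Qf^n) α) := hP6 _
          _ = (Qf^(n+1)) α := (oi_pow_succ Qf n α).symm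
  have hP8 : ∀ α, (F^(3*K+2)) (Bf α) < (Bf^(3*K+1)) α := by
    intro α
    have hsplit : (Bf^(3*K+1)) α = (Bf^(K-1)) ((Bf^(2*K+1)) (Bf α)) := by
      rw [show 3*K+1 = (K-1)+((2*K+1)+1) by omega, oi_pow_add, oi_pow_add, pow_one]
    have s1 : (Bf^(2*K+1)) (Bf α) = Qf (Af (Bf α)) := hQA _
    have t1 : (F^(K+1)) (Bf α) < Af (Bf α) := hAs _
    have t2 : Af ((F^(K+1)) (Bf α)) < Af (Af (Bf α)) := Af.strictMono t1
    have t3 : (F^(K+1)) ((F^(K+1)) (Bf α)) < Af ((F^(K+1)) (Bf α)) := hAs _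
    have s2 : (F^(2*K+2)) (Bf α) < Af (Af (Bf α)) := by
      have e : (F^(2*K+2)) (Bf α) = (F^(K+1)) ((F^(K+1)) (Bf α)) := by
        rw [show 2*K+2 = (K+1)+(K+1) by ring, oi_pow_add]
      rw [e]
      exact lt_trans t3 t2
    have s3 : F ((F^(2*K+2)) (Bf α)) < F (Af (Af (Bf α))) := F.strictMono s2
    have s4 : F (Af (Af (Bf α))) ≤ Qf (Af (Bf α)) := hP2 _
    have s5 : (Bf^(K-1)) (F ((F^(2*K+2)) (Bf α))) < (Bf^(K-1)) ((Bf^(2*K+1)) (Bf α)) := by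
      apply (Bf^(K-1)).strictMono
      rw [s1]
      exact lt_of_lt_of_le s3 s4
    have s6 : (F^(3*K+2)) (Bf α) ≤ (Bf^(K-1)) (F ((F^(2*K+2)) (Bf α))) := by
      have e : (F^(3*K+2)) (Bf α) = (F^(K-1)) (F ((F^(2*K+2)) (Bf α))) := by
        rw [show 3*K+2 = (K-1)+((2*K+2)+1) by omega, oi_pow_add, oi_pow_succ]
      rw [e]
      exact hP4 _ _
    rw [hsplit]
    exact lt_of_le_of_lt s6 s5
  -- Step 3: conclusion
  intro α
  refine ((ρ (x^(p*k+2*p-3))).lt_iff_lt).mp ?_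
  have gl : (ρ (x^(p*k+2*p-3))) ((ρ y) α) = (F^n2) (Bf α) := by
    have ee : x^(p*k+2*p-3) * y = x^(p*k+2*p-4) * bb := by rw [hbb']; group
    calc (ρ (x^(p*k+2*p-3))) ((ρ y) α) = (ρ (x^(p*k+2*p-3) * y)) α := by
          rw [map_mul, oi_mul_apply]
      _ = (ρ (x^(p*k+2*p-4) * bb)) α := by rw [ee]
      _ = (ρ (x^(p*k+2*p-4))) (Bf α) := by rw [map_mul, oi_mul_apply, hBf]
      _ = (F^n2) (Bf α) := by
          rw [map_zpow, hF]
          congr 1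
          exact oi_zpow_eq_pow _ (by omega)
  have gr : (ρ (x^(p*k+2*p-3))) ((ρ (x ^ (-(p * k + 2 * p - 2)) * lam)) α)
      = (Qf^m3) ((Bf^(3*K+1)) α) := by
    have ee : x^(p*k+2*p-3) * (x ^ (-(p * k + 2 * p - 2)) * lam) = q^(p-3) * bb^(3*k+1) := by
      rw [hKEY]; group
    calc (ρ (x^(p*k+2*p-3))) ((ρ (x ^ (-(p * k + 2 * p - 2)) * lam)) α)
        = (ρ (x^(p*k+2*p-3) * (x ^ (-(p * k + 2 * p - 2)) * lam))) α := by
          simp only [map_mul, oi_mul_apply]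
      _ = (ρ (q^(p-3) * bb^(3*k+1))) α := by rw [ee]
      _ = (Qf^m3) ((Bf^(3*K+1)) α) := by rw [map_mul, oi_mul_apply, cQ3, c3K]
  rw [gl, gr]
  -- final chain
  have harith : n2 = m3*(K+2)+(3*K+2) := by
    have e_m3 : ((m3 : ℕ) : ℤ) = p-3 := Int.toNat_of_nonneg (by omega)
    have e_K : ((K : ℕ) : ℤ) = k := Int.toNat_of_nonneg (by omega)
    have e_n2 : ((n2 : ℕ) : ℤ) = p*k+2*p-4 := Int.toNat_of_nonneg (by omega)
    have : ((n2 : ℕ) : ℤ) = ((m3*(K+2)+(3*K+2) : ℕ) : ℤ) := by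
      push_cast
      rw [e_m3, e_K, e_n2]
      ring
    exact_mod_cast this
  have u1 : (F^n2) (Bf α) = (F^(m3*(K+2))) ((F^(3*K+2)) (Bf α)) := by
    rw [harith, oi_pow_add]
  have u2 : (F^(m3*(K+2))) ((F^(3*K+2)) (Bf α)) ≤ (Qf^m3) ((F^(3*K+2)) (Bf α)) := hP7 _ _
  have u3 : (Qf^m3) ((F^(3*K+2)) (Bf α)) < (Qf^m3) ((Bf^(3*K+1)) α) :=
    (Qf^m3).strictMono (hP8 α)
  rw [u1]
  exact lt_of_le_of_lt u2 u3
end
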